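/- arXiv:2002.00601 — 3 statements merged into one kernel-verified Lean document; each statement's English description precedes it below -/
import Mathlib

section
/- Let u, v : ℝ → ℝ be smooth functions with 0 < v(s) < π for all s, and suppose the curve α(s) := Φ(u(s), v(s)) on the timelike conical surface satisfies ⟨α'(s), α'(s)⟩ = −1 for all s (α is timelike unit speed) and α''(s) − α(s) ≠ 0 for all s (α is non-geodesic in S³₁). Then ⟨p, α''(s) − α(s)⟩ = 0 for all s (i.e., α is a timelike rectifying curve with respect to p) if and only if for all s the vector α''(s) − α(s) is ⟨,⟩-orthogonal to both partial derivatives ∂Φ/∂u(u(s), v(s)) and ∂Φ/∂v(u(s), v(s)) (i.e., α is a geodesic of the timelike conical surface). -/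
open Real

/-- The Minkowski scalar product on `ℝ⁴₁`:
`⟨x,y⟩ = -x₁y₁ + x₂y₂ + x₃y₃ + x₄y₄`. -/
noncomputable def mdot (x y : Fin 4 → ℝ) : ℝ :=
  -(x 0 * y 0) + x 1 * y 1 + x 2 * y 2 + x 3 * y 3

/-!
Write `β = α'' - α`. Differentiating `⟨α, α⟩ = 1` and `⟨α', α'⟩ = -1` shows that `β` is
orthogonal to `α` and to `α'`. On the cone the apex is recovered as `p = cos v • α - sin v • Φ_v`,
so `⟨p, β⟩ = -sin v ⟨Φ_v, β⟩`, and the chain rule `α' = u' Φ_u + v' Φ_v` gives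
`u' ⟨Φ_u, β⟩ + v' ⟨Φ_v, β⟩ = 0`. Since `sin v ≠ 0` and `u' ≠ 0` (otherwise `α' = v' Φ_v` would be
spacelike, as `⟨Φ_v, Φ_v⟩ = 1`), `⟨p, β⟩ = 0` is equivalent to `β ⊥ Φ_u, Φ_v`.
-/

lemma mdot_comm (x y : Fin 4 → ℝ) : mdot x y = mdot y x := by
  simp only [mdot]; ring

lemma mdot_add_left (x y z : Fin 4 → ℝ) : mdot (x + y) z = mdot x z + mdot y z := by
  simp only [mdot, Pi.add_apply]; ring

lemma mdot_sub_left (x y z : Fin 4 → ℝ) : mdot (x - y) z = mdot x z - mdot y z := by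
  simp only [mdot, Pi.sub_apply]; ring

lemma mdot_smul_left (a : ℝ) (x y : Fin 4 → ℝ) : mdot (a • x) y = a * mdot x y := by
  simp only [mdot, Pi.smul_apply, smul_eq_mul]; ring

lemma mdot_add_right (x y z : Fin 4 → ℝ) : mdot x (y + z) = mdot x y + mdot x z := by
  rw [mdot_comm, mdot_add_left, mdot_comm y, mdot_comm z]

lemma mdot_sub_right (x y z : Fin 4 → ℝ) : mdot x (y - z) = mdot x y - mdot x z := by
  rw [mdot_comm, mdot_sub_left, mdot_comm y, mdot_comm z]

lemma mdot_smul_right (a : ℝ) (x y : Fin 4 → ℝ) : mdot x (a • y) = a * mdot x y := by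
  rw [mdot_comm, mdot_smul_left, mdot_comm]

lemma hasDerivAt_mdot {f g : ℝ → Fin 4 → ℝ} {f' g' : Fin 4 → ℝ} {s : ℝ}
    (hf : HasDerivAt f f' s) (hg : HasDerivAt g g' s) :
    HasDerivAt (fun t => mdot (f t) (g t)) (mdot f' (g s) + mdot (f s) g') s := by
  have hfi : ∀ i, HasDerivAt (fun t => f t i) (f' i) s := fun i => hasDerivAt_pi.mp hf i
  have hgi : ∀ i, HasDerivAt (fun t => g t i) (g' i) s := fun i => hasDerivAt_pi.mp hg i
  refine (((((hfi 0).mul (hgi 0)).neg.add ((hfi 1).mul (hgi 1))).add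
      ((hfi 2).mul (hgi 2))).add ((hfi 3).mul (hgi 3))).congr_deriv ?_
  simp only [mdot]; ring

lemma mdot_add_mdot_eq_zero_of_hasDerivAt {f g : ℝ → Fin 4 → ℝ} {f' g' : Fin 4 → ℝ} {s c : ℝ}
    (hf : HasDerivAt f f' s) (hg : HasDerivAt g g' s) (hc : ∀ t, mdot (f t) (g t) = c) :
    mdot f' (g s) + mdot (f s) g' = 0 :=
  (hasDerivAt_mdot hf hg).unique <| (funext hc : (fun t => mdot (f t) (g t)) = fun _ => c) ▸
    hasDerivAt_const s c

lemma mdot_deriv_deriv_sub_self_eq_zero {α : ℝ → Fin 4 → ℝ} {s : ℝ}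
    (hα : Differentiable ℝ α) (hα' : DifferentiableAt ℝ (deriv α) s)
    (hsphere : ∀ t, mdot (α t) (α t) = 1) (hunit : ∀ t, mdot (deriv α t) (deriv α t) = -1) :
    mdot (α s) (deriv (deriv α) s - α s) = 0 ∧
      mdot (deriv α s) (deriv (deriv α) s - α s) = 0 := by
  have hαt : ∀ t, HasDerivAt α (deriv α t) t := fun t => (hα t).hasDerivAt
  have hα'α : ∀ t, mdot (deriv α t) (α t) = 0 := fun t => by
    have := mdot_add_mdot_eq_zero_of_hasDerivAt (hαt t) (hαt t) hsphere
    rw [mdot_comm (α t)] at this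
    linarith
  have hαα'' : mdot (α s) (deriv (deriv α) s) = 1 := by
    have := mdot_add_mdot_eq_zero_of_hasDerivAt (hαt s) hα'.hasDerivAt
      (c := 0) fun t => by rw [mdot_comm]; exact hα'α t
    rw [hunit] at this
    linarith
  have hα'α'' : mdot (deriv α s) (deriv (deriv α) s) = 0 := by
    have := mdot_add_mdot_eq_zero_of_hasDerivAt hα'.hasDerivAt hα'.hasDerivAt hunit
    rw [mdot_comm (deriv (deriv α) s)] at this
    linarith
  rw [mdot_sub_right, mdot_sub_right, hαα'', hsphere, hα'α'', hα'α]
  norm_num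

section Cone

variable {E : Type*} [NormedAddCommGroup E] [NormedSpace ℝ E]

lemma hasDerivAt_cone_left (p : E) {γ : ℝ → E} {γ' : E} {u : ℝ} (v : ℝ)
    (hγ : HasDerivAt γ γ' u) :
    HasDerivAt (fun u' => cos v • p + sin v • γ u') (sin v • γ') u := by
  simpa using (hγ.const_smul (sin v)).const_add (cos v • p)

lemma hasDerivAt_cone_right (p q : E) (v : ℝ) :
    HasDerivAt (fun v' => cos v' • p + sin v' • q) (-sin v • p + cos v • q) v :=
  ((hasDerivAt_cos v).smul_const p).add ((hasDerivAt_sin v).smul_const q)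

lemma hasDerivAt_cone_comp (p : E) {γ : ℝ → E} {u v : ℝ → ℝ} {γ' : E} {u' v' s : ℝ}
    (hγ : HasDerivAt γ γ' (u s)) (hu : HasDerivAt u u' s) (hv : HasDerivAt v v' s) :
    HasDerivAt (fun t => cos (v t) • p + sin (v t) • γ (u t))
      (u' • (sin (v s) • γ') + v' • (-sin (v s) • p + cos (v s) • γ (u s))) s := by
  refine (((hasDerivAt_cos (v s)).comp s hv).smul_const p).add
    (((hasDerivAt_sin (v s)).comp s hv).smul (hγ.scomp s hu)) |>.congr_deriv ?_
  simp only [Function.comp_apply]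
  module

lemma cos_smul_cone_sub_sin_smul (p q : E) (v : ℝ) :
    cos v • (cos v • p + sin v • q) - sin v • (-sin v • p + cos v • q) = p := by
  calc _ = (sin v ^ 2 + cos v ^ 2) • p := by module
    _ = p := by rw [sin_sq_add_cos_sq, one_smul]

end Cone

lemma mdot_smul_add_smul_self {p q : Fin 4 → ℝ} (hp : mdot p p = 1) (hq : mdot q q = 1)
    (hpq : mdot p q = 0) {a b : ℝ} (hab : a ^ 2 + b ^ 2 = 1) :
    mdot (a • p + b • q) (a • p + b • q) = 1 := by
  simp only [mdot_add_left, mdot_add_right, mdot_smul_left, mdot_smul_right, hp, hq, hpq,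
    mdot_comm q p]
  linear_combination hab

lemma ne_zero_of_mdot_self_eq_neg_one {w x y : Fin 4 → ℝ} {a b : ℝ}
    (hw : mdot w w = -1) (hy : mdot y y = 1) (hxy : w = a • x + b • y) : a ≠ 0 := by
  rintro rfl
  rw [hxy, zero_smul, zero_add, mdot_smul_left, mdot_smul_right, hy] at hw
  nlinarith [sq_nonneg b]

lemma mdot_eq_zero_iff_of_cone {p α α' Φu Φv β : Fin 4 → ℝ} {a b c d : ℝ}
    (hp : c • α - d • Φv = p) (hd : d ≠ 0) (ha : a ≠ 0) (hα' : α' = a • Φu + b • Φv)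
    (hαβ : mdot α β = 0) (hα'β : mdot α' β = 0) :
    mdot p β = 0 ↔ mdot β Φu = 0 ∧ mdot β Φv = 0 := by
  have hpβ : mdot p β = -d * mdot β Φv := by
    rw [← hp, mdot_sub_left, mdot_smul_left, mdot_smul_left, hαβ, mdot_comm Φv]
    ring
  rw [hα', mdot_add_left, mdot_smul_left, mdot_smul_left, mdot_comm Φu, mdot_comm Φv] at hα'β
  rw [hpβ]
  constructor
  · intro h
    have hΦv : mdot β Φv = 0 := by simpa [hd] using h
    rw [hΦv, mul_zero, add_zero] at hα'β
    exact ⟨(mul_eq_zero.mp hα'β).resolve_left ha, hΦv⟩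
  · rintro ⟨-, hΦv⟩
    rw [hΦv, mul_zero]

theorem timelike_rectifying_iff_geodesic_of_cone_general
    (p : Fin 4 → ℝ) (hp : mdot p p = 1)
    (γ : ℝ → Fin 4 → ℝ) (hγsm : ContDiff ℝ (⊤ : ℕ∞) γ)
    (hγ1 : ∀ u, mdot (γ u) (γ u) = 1)
    (hγp : ∀ u, mdot (γ u) p = 0)
    (Φ : ℝ → ℝ → Fin 4 → ℝ)
    (hΦ : ∀ u v, Φ u v = Real.cos v • p + Real.sin v • γ u)
    (u v : ℝ → ℝ) (husm : ContDiff ℝ (⊤ : ℕ∞) u) (hvsm : ContDiff ℝ (⊤ : ℕ∞) v)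
    (hvrange : ∀ s, 0 < v s ∧ v s < Real.pi)
    (α : ℝ → Fin 4 → ℝ) (hα : ∀ s, α s = Φ (u s) (v s))
    (hunit : ∀ s, mdot (deriv α s) (deriv α s) = -1) :
    (∀ s, mdot p (deriv (deriv α) s - α s) = 0) ↔
      (∀ s, mdot (deriv (deriv α) s - α s) (deriv (fun u' => Φ u' (v s)) (u s)) = 0 ∧
            mdot (deriv (deriv α) s - α s) (deriv (fun v' => Φ (u s) v') (v s)) = 0) := by
  obtain rfl : Φ = fun u v => cos v • p + sin v • γ u := funext₂ hΦ
  obtain rfl : α = fun s => cos (v s) • p + sin (v s) • γ (u s) := funext hα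
  have hγd : Differentiable ℝ γ := hγsm.differentiable (by simp)
  have hαsm : ContDiff ℝ (⊤ : ℕ∞) fun s => cos (v s) • p + sin (v s) • γ (u s) :=
    ((contDiff_cos.comp hvsm).smul contDiff_const).add
      ((contDiff_sin.comp hvsm).smul (hγsm.comp husm))
  have hα'd : Differentiable ℝ (deriv fun s => cos (v s) • p + sin (v s) • γ (u s)) :=
    (contDiff_infty_iff_deriv.mp hαsm).2.differentiable (by simp)
  have hpγ : ∀ u, mdot p (γ u) = 0 := fun u => mdot_comm p _ ▸ hγp u
  refine forall_congr' fun s => ?_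
  have hα' := hasDerivAt_cone_comp p (hγd (u s)).hasDerivAt
    (husm.differentiable (by simp) s).hasDerivAt (hvsm.differentiable (by simp) s).hasDerivAt
  obtain ⟨hαβ, hα'β⟩ := mdot_deriv_deriv_sub_self_eq_zero (hαsm.differentiable (by simp))
    (hα'd s) (fun t => mdot_smul_add_smul_self hp (hγ1 _) (hpγ _) (cos_sq_add_sin_sq _)) hunit
  have hu' : deriv u s ≠ 0 := ne_zero_of_mdot_self_eq_neg_one (hunit s)
    (mdot_smul_add_smul_self hp (hγ1 _) (hpγ _) (by rw [neg_sq, sin_sq_add_cos_sq])) hα'.deriv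
  rw [(hasDerivAt_cone_left p (v s) (hγd (u s)).hasDerivAt).deriv,
    (hasDerivAt_cone_right p (γ (u s)) (v s)).deriv]
  exact mdot_eq_zero_iff_of_cone (cos_smul_cone_sub_sin_smul p (γ (u s)) (v s))
    (sin_pos_of_pos_of_lt_pi (hvrange s).1 (hvrange s).2).ne' hu' hα'.deriv hαβ hα'β

/-- A timelike unit speed non-geodesic curve `α(s) = Φ(u(s), v(s))` on the timelike
conical surface `Φ(u,v) = cos v • p + sin v • γ(u)` is a timelike rectifying curve with
respect to the apex `p` iff it is a geodesic of the conical surface. -/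
theorem timelike_rectifying_iff_geodesic_of_cone
    (p : Fin 4 → ℝ) (hp : mdot p p = 1)
    (γ : ℝ → Fin 4 → ℝ) (hγsm : ContDiff ℝ (⊤ : ℕ∞) γ)
    (hγ1 : ∀ u, mdot (γ u) (γ u) = 1)
    (hγp : ∀ u, mdot (γ u) p = 0)
    (hγ' : ∀ u, mdot (deriv γ u) (deriv γ u) = -1)
    (Φ : ℝ → ℝ → Fin 4 → ℝ)
    (hΦ : ∀ u v, Φ u v = Real.cos v • p + Real.sin v • γ u)
    (u v : ℝ → ℝ) (husm : ContDiff ℝ (⊤ : ℕ∞) u) (hvsm : ContDiff ℝ (⊤ : ℕ∞) v)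
    (hvrange : ∀ s, 0 < v s ∧ v s < Real.pi)
    (α : ℝ → Fin 4 → ℝ) (hα : ∀ s, α s = Φ (u s) (v s))
    (hunit : ∀ s, mdot (deriv α s) (deriv α s) = -1)
    (hnongeo : ∀ s, deriv (deriv α) s - α s ≠ 0) :
    (∀ s, mdot p (deriv (deriv α) s - α s) = 0) ↔
      (∀ s, mdot (deriv (deriv α) s - α s) (deriv (fun u' => Φ u' (v s)) (u s)) = 0 ∧
            mdot (deriv (deriv α) s - α s) (deriv (fun v' => Φ (u s) v') (v s)) = 0) :=
  timelike_rectifying_iff_geodesic_of_cone_general p hp γ hγsm hγ1 hγp Φ hΦ u v husm hvsm hvrange α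
    hα hunit
end

section
/- Let h : ℝ → ℝ be a smooth function with h(t) > 0 for all t that satisfies the differential equation h(t)·h''(t) − 2·h'(t)² + h(t)² = 0 for all t ∈ ℝ. If h'(t₁) = 0 for some t₁ ∈ ℝ, then h(t) = h(t₁)·sech(t − t₁) for all t ∈ ℝ. -/
open Real

/-!
The equation `h h'' - 2 h'² + h² = 0` is linearised by `g = 1 / h`: a direct computation gives
`g'' = (2 h'² - h h'') / h³ = g`. The solution of `g'' = g` with `g'(t₁) = 0` is
`g(t₁) cosh (t - t₁)`, uniqueness coming from the first-order equations `u' = u` and `w' = -w`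
satisfied by `u = y + y'` and `w = y - y'` for any solution `y` of `y'' = y`.
-/

theorem eq_zero_of_hasDerivAt_const_mul {f : ℝ → ℝ} {c a : ℝ}
    (hf : ∀ t, HasDerivAt f (c * f t) t) (ha : f a = 0) (t : ℝ) : f t = 0 := by
  have hconst : ∀ s, HasDerivAt (fun s => f s * exp (-(c * s))) 0 s := fun s => by
    have hexp : HasDerivAt (fun s => exp (-(c * s))) (exp (-(c * s)) * -(c * 1)) s :=
      ((hasDerivAt_id s).const_mul c).neg.exp
    exact ((hf s).mul hexp).congr_deriv (by ring)
  have := is_const_of_deriv_eq_zero (fun s => (hconst s).differentiableAt)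
    (fun s => (hconst s).deriv) t a
  simpa [ha, exp_ne_zero] using this

theorem eq_zero_of_hasDerivAt_of_hasDerivAt_self {y y' : ℝ → ℝ} {a : ℝ}
    (hy : ∀ t, HasDerivAt y (y' t) t) (hy' : ∀ t, HasDerivAt y' (y t) t)
    (ha : y a = 0) (ha' : y' a = 0) (t : ℝ) : y t = 0 := by
  have hsum : y t + y' t = 0 :=
    eq_zero_of_hasDerivAt_const_mul (f := fun s => y s + y' s) (c := 1) (a := a)
      (fun s => ((hy s).add (hy' s)).congr_deriv (by ring)) (by simp [ha, ha']) t
  have hdiff : y t - y' t = 0 :=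
    eq_zero_of_hasDerivAt_const_mul (f := fun s => y s - y' s) (c := -1) (a := a)
      (fun s => ((hy s).sub (hy' s)).congr_deriv (by ring)) (by simp [ha, ha']) t
  linarith

theorem eq_mul_cosh_of_hasDerivAt {g g' : ℝ → ℝ} {a : ℝ}
    (hg : ∀ t, HasDerivAt g (g' t) t) (hg' : ∀ t, HasDerivAt g' (g t) t) (ha : g' a = 0)
    (t : ℝ) : g t = g a * cosh (t - a) := by
  have hcosh : ∀ s, HasDerivAt (fun s => cosh (s - a)) (sinh (s - a)) s := fun s => by
    simpa using ((hasDerivAt_id s).sub_const a).cosh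
  have hsinh : ∀ s, HasDerivAt (fun s => sinh (s - a)) (cosh (s - a)) s := fun s => by
    simpa using ((hasDerivAt_id s).sub_const a).sinh
  have := eq_zero_of_hasDerivAt_of_hasDerivAt_self
    (y := fun s => g s - g a * cosh (s - a)) (y' := fun s => g' s - g a * sinh (s - a)) (a := a)
    (fun s => (hg s).sub ((hcosh s).const_mul _)) (fun s => (hg' s).sub ((hsinh s).const_mul _))
    (by simp) (by simp [ha]) t
  exact sub_eq_zero.mp this

theorem hasDerivAt_neg_deriv_div_sq_of_ode {h : ℝ → ℝ} {t : ℝ} (hd : DifferentiableAt ℝ h t)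
    (hd' : DifferentiableAt ℝ (deriv h) t) (hne : h t ≠ 0)
    (hode : h t * deriv (deriv h) t - 2 * deriv h t ^ 2 + h t ^ 2 = 0) :
    HasDerivAt (fun s => -deriv h s / h s ^ 2) (h t)⁻¹ t := by
  have hsq : HasDerivAt (fun s => h s ^ 2) (2 * h t * deriv h t) t :=
    (hd.hasDerivAt.pow 2).congr_deriv (by ring)
  refine (hd'.hasDerivAt.neg.div hsq (pow_ne_zero 2 hne)).congr_deriv ?_
  rw [Pi.neg_apply]
  field_simp
  linear_combination (-1 : ℝ) * hode

/-- A positive solution of `h h'' - 2 (h')² + h² = 0` with a critical point at `t₁`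
is `h(t) = h(t₁) sech (t - t₁)`. -/
theorem ode_solution_sech
    (h : ℝ → ℝ) (hsm : ContDiff ℝ (⊤ : ℕ∞) h)
    (hpos : ∀ t, 0 < h t)
    (hode : ∀ t, h t * deriv (deriv h) t - 2 * (deriv h t) ^ 2 + (h t) ^ 2 = 0)
    (t₁ : ℝ) (hcrit : deriv h t₁ = 0) :
    ∀ t, h t = h t₁ * (Real.cosh (t - t₁))⁻¹ := by
  obtain ⟨hd, hd'⟩ := contDiff_infty_iff_deriv.mp hsm
  have hd2 : Differentiable ℝ (deriv h) := hd'.differentiable (by simp)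
  intro t
  have hinv : (h t)⁻¹ = (h t₁)⁻¹ * cosh (t - t₁) :=
    eq_mul_cosh_of_hasDerivAt (g := fun s => (h s)⁻¹) (g' := fun s => -deriv h s / h s ^ 2)
      (fun s => (hd s).hasDerivAt.inv (hpos s).ne')
      (fun s => hasDerivAt_neg_deriv_div_sq_of_ode (hd s) (hd2 s) (hpos s).ne' (hode s))
      (by simp [hcrit]) t
  rw [← inv_inv (h t), hinv, mul_inv, inv_inv]
end

section
/- Let a > 0 and t₀ ∈ ℝ, and define η(t) := arctan(a·sech(t + t₀)) for t ∈ ℝ. Then for all t ∈ ℝ: (sin²(η(t)) − η'(t)²)²·(a² + cosh²(t + t₀))³ = a²·(1 + a²)²·sin²(η(t)); equivalently, writing w(t)² = sin²(η(t)) − η'(t)², one has w(t)⁴/sin²(η(t)) = a²(1+a²)²·(a² + cosh²(t + t₀))⁻³. -/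
/-! With `c = cosh (t + t₀)`, `s = sinh (t + t₀)` and `D = a² + c²`, one has `sin² η = a² / D` and
`η' = -a s / D`, so `c² - s² = 1` gives `sin² η - η'² = a² (1 + a²) / D²`; squaring and multiplying
by `D³` leaves `a² (1 + a²)² · a² / D = a² (1 + a²)² sin² η`. -/

open Real

lemma hasDerivAt_arctan_mul_inv_cosh (a x : ℝ) :
    HasDerivAt (fun x => arctan (a * (cosh x)⁻¹)) (-(a * sinh x) / (a ^ 2 + cosh x ^ 2)) x := by
  have hc := (cosh_pos x).ne'
  have hsech : HasDerivAt (fun x => a * (cosh x)⁻¹) (a * (-sinh x / cosh x ^ 2)) x :=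
    ((hasDerivAt_cosh x).inv hc).const_mul a
  convert hsech.arctan using 1
  field_simp
  ring

lemma sin_sq_arctan_mul_inv_cosh (a x : ℝ) :
    sin (arctan (a * (cosh x)⁻¹)) ^ 2 = a ^ 2 / (a ^ 2 + cosh x ^ 2) := by
  have hc := (cosh_pos x).ne'
  rw [sin_sq_arctan]
  field_simp
  ring

lemma sq_div_sub_sq_neg_mul_sinh_div (a x : ℝ) :
    a ^ 2 / (a ^ 2 + cosh x ^ 2) - (-(a * sinh x) / (a ^ 2 + cosh x ^ 2)) ^ 2
      = a ^ 2 * (1 + a ^ 2) / (a ^ 2 + cosh x ^ 2) ^ 2 := by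
  have hD : 0 < a ^ 2 + cosh x ^ 2 := by positivity
  field_simp
  rw [cosh_sq' x]
  ring

theorem speed_identity_arctan_sech_general
    (a t₀ : ℝ)
    (η : ℝ → ℝ) (hη : ∀ t, η t = Real.arctan (a * (Real.cosh (t + t₀))⁻¹)) :
    ∀ t, (Real.sin (η t) ^ 2 - (deriv η t) ^ 2) ^ 2
          * (a ^ 2 + Real.cosh (t + t₀) ^ 2) ^ 3
        = a ^ 2 * (1 + a ^ 2) ^ 2 * Real.sin (η t) ^ 2 := by
  intro t
  have hderiv : deriv η t = -(a * sinh (t + t₀)) / (a ^ 2 + cosh (t + t₀) ^ 2) := by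
    rw [funext hη]
    exact ((hasDerivAt_arctan_mul_inv_cosh a (t + t₀)).comp_add_const t t₀).deriv
  rw [hderiv, hη, sin_sq_arctan_mul_inv_cosh, sq_div_sub_sq_neg_mul_sinh_div]
  have hD : 0 < a ^ 2 + cosh (t + t₀) ^ 2 := by positivity
  field_simp

/-- For `η(t) = arctan (a sech (t + t₀))` with `a > 0`:
`(sin²(η) - (η')²)² (a² + cosh²(t+t₀))³ = a² (1+a²)² sin²(η)`. -/
theorem speed_identity_arctan_sech
    (a t₀ : ℝ) (ha : 0 < a)
    (η : ℝ → ℝ) (hη : ∀ t, η t = Real.arctan (a * (Real.cosh (t + t₀))⁻¹)) :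
    ∀ t, (Real.sin (η t) ^ 2 - (deriv η t) ^ 2) ^ 2
          * (a ^ 2 + Real.cosh (t + t₀) ^ 2) ^ 3
        = a ^ 2 * (1 + a ^ 2) ^ 2 * Real.sin (η t) ^ 2 :=
  speed_identity_arctan_sech_general a t₀ η hη
end
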